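/- arXiv:1504.00605 — 6 statements merged into one kernel-verified Lean document; each statement's English description precedes it below -/
import Mathlib

section
/- The quantity H(R,θ) = R^(n-1)(cos θ - (n-1)R/n) is conserved along solutions of the autonomous system dR/dZ = -tan θ, dθ/dZ = (n-1)(1/cos θ - 1/R), i.e., if (R(Z), θ(Z)) solves this system with R(Z) > 0 and θ(Z) ∈ (-π/2, π/2) for all Z in an interval, then Z ↦ H(R(Z), θ(Z)) is constant on that interval. -/
open Real

noncomputable def H (n : ℕ) (R θ : ℝ) : ℝ := R ^ (n - 1) * (Real.cos θ - ((n : ℝ) - 1) * R / n)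

theorem hasDerivAt_H_comp {n : ℕ} {R θ : ℝ → ℝ} {R' θ' z : ℝ}
    (hR : HasDerivAt R R' z) (hθ : HasDerivAt θ θ' z) :
    HasDerivAt (fun z => H n (R z) (θ z))
      (((n - 1 : ℕ) : ℝ) * R z ^ (n - 1 - 1) * R' * (cos (θ z) - ((n : ℝ) - 1) * R z / n)
        + R z ^ (n - 1) * (-sin (θ z) * θ' - ((n : ℝ) - 1) * R' / n)) z :=
  (hR.pow (n - 1)).mul (hθ.cos.sub ((hR.const_mul _).div_const _))

/-- The expression of `hasDerivAt_H_comp` with `(R', θ')` the vector field of the system. -/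
theorem H_deriv_along_flow_eq_zero {n : ℕ} (hn : 1 ≤ n) {R θ : ℝ} (hR : R ≠ 0)
    (hcos : cos θ ≠ 0) :
    ((n - 1 : ℕ) : ℝ) * R ^ (n - 1 - 1) * (-tan θ) * (cos θ - ((n : ℝ) - 1) * R / n)
      + R ^ (n - 1) * (-sin θ * (((n : ℝ) - 1) * (1 / cos θ - 1 / R))
        - ((n : ℝ) - 1) * (-tan θ) / n) = 0 := by
  obtain ⟨m, rfl⟩ : ∃ m, n = m + 1 := ⟨n - 1, by omega⟩
  rw [tan_eq_sin_div_cos]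
  rcases m with _ | k
  · simp
  · simp only [Nat.add_sub_cancel, Nat.cast_add, Nat.cast_one, pow_succ]
    field_simp
    ring

theorem H_conserved (n : ℕ) (hn : 2 ≤ n) (a b : ℝ) (R θ : ℝ → ℝ)
    (hdom : ∀ Z ∈ Set.Ioo a b, 0 < R Z ∧ θ Z ∈ Set.Ioo (-(π / 2)) (π / 2))
    (hR : ∀ Z ∈ Set.Ioo a b, HasDerivAt R (-Real.tan (θ Z)) Z)
    (hθ : ∀ Z ∈ Set.Ioo a b,
      HasDerivAt θ (((n : ℝ) - 1) * (1 / Real.cos (θ Z) - 1 / R Z)) Z) :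
    ∀ Z₁ ∈ Set.Ioo a b, ∀ Z₂ ∈ Set.Ioo a b,
      H n (R Z₁) (θ Z₁) = H n (R Z₂) (θ Z₂) := by
  have hderiv : ∀ Z ∈ Set.Ioo a b, HasDerivAt (fun Z => H n (R Z) (θ Z)) 0 Z := by
    intro Z hZ
    obtain ⟨hRpos, hθmem⟩ := hdom Z hZ
    have hcos : cos (θ Z) ≠ 0 := (cos_pos_of_mem_Ioo hθmem).ne'
    exact (hasDerivAt_H_comp (hR Z hZ) (hθ Z hZ)).congr_deriv
      (H_deriv_along_flow_eq_zero (by omega) hRpos.ne' hcos)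
  intro Z₁ hZ₁ Z₂ hZ₂
  exact isOpen_Ioo.is_const_of_deriv_eq_zero isPreconnected_Ioo
    (fun Z hZ => (hderiv Z hZ).differentiableAt.differentiableWithinAt)
    (fun Z hZ => (hderiv Z hZ).deriv) hZ₁ hZ₂
end

section
/- Up to a rescaling of the independent variable, the system dR/dZ = -tan θ, dθ/dZ = (n-1)(1/cos θ - 1/R) is Hamiltonian: for R > 0 and θ ∈ (-π/2,π/2), one has -tan θ = (1/(R^(n-1) cos θ)) · ∂H/∂θ and (n-1)(1/cos θ - 1/R) = -(1/(R^(n-1) cos θ)) · ∂H/∂R, where H(R,θ) = R^(n-1)(cos θ - (n-1)R/n). -/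
open Real

theorem hasDerivAt_H_angle (n : ℕ) (R θ : ℝ) :
    HasDerivAt (fun θ' => H n R θ') (-(R ^ (n - 1) * sin θ)) θ := by
  simpa [H] using ((hasDerivAt_cos θ).sub_const (((n : ℝ) - 1) * R / n)).const_mul (R ^ (n - 1))

-- Written for `n = k + 2` so that the exponents `n - 1` and `n - 2` are not truncated.
theorem hasDerivAt_H_radius (k : ℕ) (R θ : ℝ) :
    HasDerivAt (fun R' => H (k + 2) R' θ) ((k + 1) * R ^ k * (cos θ - R)) R := by
  have hpow : HasDerivAt (fun R' : ℝ => R' ^ (k + 1)) ((k + 1) * R ^ k) R := by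
    simpa using hasDerivAt_pow (k + 1) R
  have hlin :
      HasDerivAt (fun R' : ℝ => cos θ - (k + 1) * R' / (k + 2)) (-((k + 1) / (k + 2))) R := by
    simpa using (((hasDerivAt_id R).const_mul ((k : ℝ) + 1)).div_const ((k : ℝ) + 2)).const_sub
      (cos θ)
  have hH : (fun R' => H (k + 2) R' θ) =
      fun R' => R' ^ (k + 1) * (cos θ - (k + 1) * R' / (k + 2)) := by
    ext R'
    rw [H, show k + 2 - 1 = k + 1 by omega]
    push_cast
    ring
  rw [hH]
  refine (hpow.mul hlin).congr_deriv ?_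
  field_simp
  ring

theorem hamiltonian_form (n : ℕ) (hn : 2 ≤ n) (R θ : ℝ)
    (hR : 0 < R) (hθ : θ ∈ Set.Ioo (-(π / 2)) (π / 2)) :
    -Real.tan θ = (1 / (R ^ (n - 1) * Real.cos θ)) * deriv (fun θ' => H n R θ') θ ∧
    ((n : ℝ) - 1) * (1 / Real.cos θ - 1 / R)
      = -(1 / (R ^ (n - 1) * Real.cos θ)) * deriv (fun R' => H n R' θ) R := by
  obtain ⟨k, rfl⟩ : ∃ k, n = k + 2 := ⟨n - 2, by omega⟩
  have hcos : cos θ ≠ 0 := (cos_pos_of_mem_Ioo hθ).ne'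
  have hpow : R ^ (k + 2 - 1) ≠ 0 := pow_ne_zero _ hR.ne'
  rw [(hasDerivAt_H_angle _ R θ).deriv, (hasDerivAt_H_radius k R θ).deriv, tan_eq_sin_div_cos]
  constructor
  · field_simp
  · rw [show k + 2 - 1 = k + 1 by omega, pow_succ] at hpow ⊢
    push_cast
    field_simp
    ring
end

section
/- There exists a unique sequence of pairs of reals (R_k, θ_k), k ∈ ℕ, with R_0 = 1, θ_0 = 0, θ_1 = 1/2, R_1 = 0, such that the formal power series R(Z) = Σ_k R_k Z^(-k), θ(Z) = Σ_k θ_k Z^(-k) formally satisfy dR/dZ = -tan θ + R/(2Z) and dθ/dZ = (n-1)(1/cos θ - 1/R) (with tan and cos replaced by their Taylor series), where at each order k, θ_k is determined by the first equation from lower-order coefficients and R_k by the second. -/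
open Real Filter

/-- `c` is a formal solution of the system, in the sense that for every `k` the
truncation at order `k` of the series `R(Z) = Σ R_j Z^(-j)`, `θ(Z) = Σ θ_j Z^(-j)`
satisfies both equations of the system up to `o(Z^(-k))` as `Z → ∞`. -/
def IsFormalSolution (n : ℕ) (c : ℕ → ℝ × ℝ) : Prop :=
  ∀ k : ℕ,
    ((fun Z : ℝ => (∑ j ∈ Finset.range (k + 1), -(j : ℝ) * (c j).1 * Z ^ (-(j : ℤ) - 1))
        - (-Real.tan (∑ j ∈ Finset.range (k + 1), (c j).2 * Z ^ (-(j : ℤ)))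
            + (∑ j ∈ Finset.range (k + 1), (c j).1 * Z ^ (-(j : ℤ))) / (2 * Z)))
      =o[atTop] fun Z : ℝ => Z ^ (-(k : ℤ))) ∧
    ((fun Z : ℝ => (∑ j ∈ Finset.range (k + 1), -(j : ℝ) * (c j).2 * Z ^ (-(j : ℤ) - 1))
        - ((n : ℝ) - 1) * (1 / Real.cos (∑ j ∈ Finset.range (k + 1), (c j).2 * Z ^ (-(j : ℤ)))
            - 1 / (∑ j ∈ Finset.range (k + 1), (c j).1 * Z ^ (-(j : ℤ)))))
      =o[atTop] fun Z : ℝ => Z ^ (-(k : ℤ)))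

/-!
Substituting `t = 1/Z`, a formal solution is a coefficient sequence whose truncations of order `k`
make both defects of the system `o(t^k)` as `t → 0⁺`, for every `k`. If two sequences starting
with `(R₀, θ₀) = (1, 0)` agree below order `k ≥ 1`, their order-`k` defects differ by
`(θ_k - θ'_k) t^k` and `-(n-1)(R_k - R'_k) t^k` up to `o(t^k)`, because `tan' 0 = 1`, `sec' 0 = 0`
and `(1/R)' 1 = -1`; as `n ≠ 1` this determines the coefficients order by order. Conversely the
defects are analytic at `0`, so a defect that is `o(t^k)` is `a t^(k+1) + o(t^(k+1))`, and the
order-`(k+1)` coefficients can be chosen to cancel that leading term. Partial solutions to every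
order, being unique, glue to a formal solution.
-/

open Asymptotics Topology

theorem isLittleO_nhdsGT_zero_iff_atTop {f g : ℝ → ℝ} :
    f =o[𝓝[>] 0] g ↔ (fun Z => f Z⁻¹) =o[atTop] fun Z => g Z⁻¹ := by
  rw [← inv_atTop₀, ← Filter.map_inv, isLittleO_map]
  rfl

theorem HasStrictDerivAt.isLittleO_comp_sub_comp {f : ℝ → ℝ} {d x : ℝ}
    (hf : HasStrictDerivAt f d x) {α : Type*} {l : Filter α} {u w g : α → ℝ}
    (hu : Tendsto u l (𝓝 x)) (hw : Tendsto w l (𝓝 x)) (hg : (fun a => u a - w a) =O[l] g) :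
    (fun a => f (u a) - f (w a) - d * (u a - w a)) =o[l] g := by
  have huw : Tendsto (fun a => (u a, w a)) l (𝓝 (x, x)) := by
    rw [nhds_prod_eq]; exact hu.prodMk hw
  refine ((hf.isLittleO.comp_tendsto huw).trans_isBigO hg).congr_left fun a => ?_
  simp only [Function.comp_apply, ContinuousLinearMap.toSpanSingleton_apply, smul_eq_mul]
  ring

theorem isLittleO_const_mul_pow_succ (C : ℝ) (k : ℕ) :
    (fun t : ℝ => C * t ^ (k + 1)) =o[𝓝[>] 0] (· ^ k) :=
  ((isLittleO_pow_pow k.lt_succ_self).const_mul_left C).mono nhdsWithin_le_nhds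

theorem eq_zero_of_isLittleO_const_mul_pow {b : ℝ} {k : ℕ}
    (h : (fun t : ℝ => b * t ^ k) =o[𝓝[>] 0] (· ^ k)) : b = 0 := by
  by_contra hb
  refine isLittleO_irrefl' ?_ ((isLittleO_const_mul_left_iff hb).mp h)
  refine (eventually_mem_nhdsWithin.mono fun t ht => ?_).frequently
  exact norm_ne_zero_iff.mpr (pow_ne_zero k (ne_of_gt ht))

theorem AnalyticAt.exists_eventuallyEq_pow_succ_mul_of_isLittleO {F g : ℝ → ℝ} {m : ℕ}
    (hg : AnalyticAt ℝ g 0) (hF : F =ᶠ[𝓝 0] fun t => t ^ m * g t) (h : F =o[𝓝[>] 0] (· ^ m)) :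
    ∃ g', AnalyticAt ℝ g' 0 ∧ F =ᶠ[𝓝 0] fun t => t ^ (m + 1) * g' t := by
  have hg_small : g =o[𝓝[>] 0] fun _ => (1 : ℝ) := by
    have := (isBigO_refl (fun t : ℝ => (t ^ m)⁻¹) (𝓝[>] 0)).mul_isLittleO
      (h.congr' (hF.filter_mono nhdsWithin_le_nhds) EventuallyEq.rfl)
    refine this.congr' ?_ ?_ <;> filter_upwards [self_mem_nhdsWithin] with t (ht : 0 < t) <;>
      field_simp
  have hg0 : g 0 = 0 := tendsto_nhds_unique
    (hg.continuousAt.tendsto.mono_left nhdsWithin_le_nhds) ((isLittleO_one_iff ℝ).mp hg_small)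
  obtain ⟨g', hg', hgg'⟩ := (natCast_le_analyticOrderAt hg (n := 1)).mp
    (Order.one_le_iff_ne_zero.mpr (hg.analyticOrderAt_ne_zero.mpr hg0))
  refine ⟨g', hg', ?_⟩
  filter_upwards [hF, hgg'] with t hFt hgt
  rw [hFt, hgt]
  simp only [sub_zero, pow_one, smul_eq_mul]
  ring

theorem AnalyticAt.exists_eventuallyEq_pow_succ_mul {F : ℝ → ℝ} (hF : AnalyticAt ℝ F 0) {k : ℕ}
    (h : F =o[𝓝[>] 0] (· ^ k)) :
    ∃ g, AnalyticAt ℝ g 0 ∧ F =ᶠ[𝓝 0] fun t => t ^ (k + 1) * g t := by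
  induction k with
  | zero =>
    exact hF.exists_eventuallyEq_pow_succ_mul_of_isLittleO (by simp) h
  | succ k ih =>
    obtain ⟨g, hg, hFg⟩ := ih (h.trans_isBigO
      ((isLittleO_pow_pow k.lt_succ_self).isBigO.mono nhdsWithin_le_nhds))
    exact hg.exists_eventuallyEq_pow_succ_mul_of_isLittleO hFg h

theorem AnalyticAt.exists_isLittleO_sub_mul_pow_succ {F : ℝ → ℝ} (hF : AnalyticAt ℝ F 0) {k : ℕ}
    (h : F =o[𝓝[>] 0] (· ^ k)) :
    ∃ a, (fun t => F t - a * t ^ (k + 1)) =o[𝓝[>] 0] (· ^ (k + 1)) := by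
  obtain ⟨g, hg, hFg⟩ := hF.exists_eventuallyEq_pow_succ_mul h
  have hg_sub : (fun t => g t - g 0) =o[𝓝 0] fun _ => (1 : ℝ) :=
    (isLittleO_one_iff ℝ).mpr (tendsto_sub_nhds_zero_iff.mpr hg.continuousAt.tendsto)
  refine ⟨g 0, (((isBigO_refl (· ^ (k + 1)) _).mul_isLittleO hg_sub).congr' ?_ ?_).mono
    nhdsWithin_le_nhds⟩
  · filter_upwards [hFg] with t ht
    rw [ht]; ring
  · simp

theorem analyticAt_tan_zero : AnalyticAt ℝ tan 0 :=
  (analyticAt_sin.div analyticAt_cos (by simp)).congr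
    (Eventually.of_forall fun x => (tan_eq_sin_div_cos x).symm)

def truncPoly (a : ℕ → ℝ) (k : ℕ) (t : ℝ) : ℝ := ∑ j ∈ Finset.range (k + 1), a j * t ^ j

section truncPoly

variable {a b : ℕ → ℝ} {k : ℕ}

theorem truncPoly_congr (h : ∀ j ≤ k, a j = b j) : truncPoly a k = truncPoly b k :=
  funext fun _ => Finset.sum_congr rfl fun j hj => by
    rw [h j (Nat.lt_succ_iff.mp (Finset.mem_range.mp hj))]

theorem truncPoly_succ (a : ℕ → ℝ) (k : ℕ) (t : ℝ) :
    truncPoly a (k + 1) t = truncPoly a k t + a (k + 1) * t ^ (k + 1) :=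
  Finset.sum_range_succ _ _

theorem truncPoly_sub_truncPoly (h : ∀ j < k, a j = b j) (t : ℝ) :
    truncPoly a k t - truncPoly b k t = (a k - b k) * t ^ k := by
  cases k with
  | zero => simp [truncPoly]
  | succ k =>
    rw [truncPoly_succ, truncPoly_succ, truncPoly_congr fun j hj => h j (by omega)]
    ring

theorem isBigO_truncPoly_sub_truncPoly {l : Filter ℝ} (h : ∀ j < k, a j = b j) :
    (fun t => truncPoly a k t - truncPoly b k t) =O[l] (· ^ k) := by
  simp only [truncPoly_sub_truncPoly h]
  exact (isBigO_refl _ _).const_mul_left _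

theorem analyticAt_truncPoly (a : ℕ → ℝ) (k : ℕ) (t : ℝ) : AnalyticAt ℝ (truncPoly a k) t := by
  unfold truncPoly; fun_prop

theorem truncPoly_apply_zero (a : ℕ → ℝ) (k : ℕ) : truncPoly a k 0 = a 0 := by
  simp [truncPoly, Finset.sum_range_succ']

theorem tendsto_truncPoly (a : ℕ → ℝ) (k : ℕ) : Tendsto (truncPoly a k) (𝓝 0) (𝓝 (a 0)) := by
  simpa [truncPoly_apply_zero] using (analyticAt_truncPoly a k 0).continuousAt.tendsto

end truncPoly

-- With `t = 1/Z`, the derivative `Σ -j R_j Z^(-j-1)` of the series `R` becomes `t Σ -j R_j t^j`.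
noncomputable def firstDefect (c : ℕ → ℝ × ℝ) (k : ℕ) (t : ℝ) : ℝ :=
  t * truncPoly (fun j => -(j : ℝ) * (c j).1) k t + tan (truncPoly (fun j => (c j).2) k t)
    - t * truncPoly (fun j => (c j).1) k t / 2

noncomputable def secondDefect (n : ℕ) (c : ℕ → ℝ × ℝ) (k : ℕ) (t : ℝ) : ℝ :=
  t * truncPoly (fun j => -(j : ℝ) * (c j).2) k t
    - ((n : ℝ) - 1) * (1 / cos (truncPoly (fun j => (c j).2) k t)
      - 1 / truncPoly (fun j => (c j).1) k t)

def SolvesToOrder (n : ℕ) (c : ℕ → ℝ × ℝ) (k : ℕ) : Prop :=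
  firstDefect c k =o[𝓝[>] 0] (· ^ k) ∧ secondDefect n c k =o[𝓝[>] 0] (· ^ k)

theorem isFormalSolution_iff_forall_solvesToOrder (n : ℕ) (c : ℕ → ℝ × ℝ) :
    IsFormalSolution n c ↔ ∀ k, SolvesToOrder n c k := by
  have hpow : ∀ (Z : ℝ) (j : ℕ), Z ^ (-(j : ℤ)) = Z⁻¹ ^ j := fun Z j => by
    rw [zpow_neg, zpow_natCast, inv_pow]
  have hpow' : ∀ (Z : ℝ) (j : ℕ), Z ^ (-(j : ℤ) - 1) = Z⁻¹ ^ j * Z⁻¹ := fun Z j => by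
    rw [show -(j : ℤ) - 1 = -((j + 1 : ℕ) : ℤ) by push_cast; ring, hpow, pow_succ]
  refine forall_congr' fun k => and_congr ?_ ?_ <;>
    rw [isLittleO_nhdsGT_zero_iff_atTop] <;>
    simp only [firstDefect, secondDefect, truncPoly, hpow, hpow', ← mul_assoc,
      ← Finset.sum_mul] <;>
    refine Iff.of_eq (congrArg₂ _ (funext fun Z => ?_) rfl) <;>
    ring

section

variable {n : ℕ} {c c' : ℕ → ℝ × ℝ} {k : ℕ}

theorem SolvesToOrder.congr (h : ∀ j ≤ k, c j = c' j) (hc : SolvesToOrder n c k) :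
    SolvesToOrder n c' k := by
  have hP : ∀ φ : ℕ → ℝ × ℝ → ℝ,
      truncPoly (fun j => φ j (c j)) k = truncPoly (fun j => φ j (c' j)) k :=
    fun φ => truncPoly_congr fun j hj => by rw [h j hj]
  unfold SolvesToOrder firstDefect secondDefect at *
  rwa [← hP fun _ p => p.1, ← hP fun _ p => p.2, ← hP fun j p => -(j : ℝ) * p.1,
    ← hP fun j p => -(j : ℝ) * p.2]

theorem truncPoly_update_succ (φ : ℕ → ℝ × ℝ → ℝ) (v : ℝ × ℝ) (t : ℝ) :
    truncPoly (fun j => φ j (Function.update c (k + 1) v j)) (k + 1) t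
      = truncPoly (fun j => φ j (c j)) k t + φ (k + 1) v * t ^ (k + 1) := by
  rw [truncPoly_succ, Function.update_self,
    truncPoly_congr fun j hj => by rw [Function.update_of_ne (by omega)]]

theorem firstDefect_update_succ_zero :
    firstDefect (Function.update c (k + 1) 0) (k + 1) = firstDefect c k := by
  funext t
  simp only [firstDefect, truncPoly_update_succ (fun _ p => p.1),
    truncPoly_update_succ (fun _ p => p.2), truncPoly_update_succ (fun j p => -(j : ℝ) * p.1)]
  simp

theorem secondDefect_update_succ_zero :
    secondDefect n (Function.update c (k + 1) 0) (k + 1) = secondDefect n c k := by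
  funext t
  simp only [secondDefect, truncPoly_update_succ (fun _ p => p.1),
    truncPoly_update_succ (fun _ p => p.2), truncPoly_update_succ (fun j p => -(j : ℝ) * p.2)]
  simp

theorem analyticAt_firstDefect (h0 : c 0 = (1, 0)) : AnalyticAt ℝ (firstDefect c k) 0 := by
  have htan : AnalyticAt ℝ (fun t => tan (truncPoly (fun j => (c j).2) k t)) 0 :=
    analyticAt_tan_zero.comp_of_eq (analyticAt_truncPoly _ k 0) (by simp [truncPoly_apply_zero, h0])
  unfold firstDefect
  have := analyticAt_truncPoly (fun j => (c j).1) k 0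
  have := analyticAt_truncPoly (fun j => -(j : ℝ) * (c j).1) k 0
  fun_prop

theorem analyticAt_secondDefect (h0 : c 0 = (1, 0)) : AnalyticAt ℝ (secondDefect n c k) 0 := by
  have hθ := analyticAt_truncPoly (fun j => (c j).2) k 0
  have hR := analyticAt_truncPoly (fun j => (c j).1) k 0
  have := analyticAt_truncPoly (fun j => -(j : ℝ) * (c j).2) k 0
  unfold secondDefect
  refine AnalyticAt.sub (by fun_prop) (analyticAt_const.mul (AnalyticAt.sub ?_ ?_))
  · exact analyticAt_const.div (analyticAt_cos.comp hθ) (by simp [truncPoly_apply_zero, h0])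
  · exact analyticAt_const.div hR (by simp [truncPoly_apply_zero, h0])

theorem tendsto_truncPoly_fst (h0 : c 0 = (1, 0)) :
    Tendsto (truncPoly (fun j => (c j).1) k) (𝓝[>] 0) (𝓝 1) := by
  simpa [h0] using (tendsto_truncPoly (fun j => (c j).1) k).mono_left nhdsWithin_le_nhds

theorem tendsto_truncPoly_snd (h0 : c 0 = (1, 0)) :
    Tendsto (truncPoly (fun j => (c j).2) k) (𝓝[>] 0) (𝓝 0) := by
  simpa [h0] using (tendsto_truncPoly (fun j => (c j).2) k).mono_left nhdsWithin_le_nhds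

theorem isLittleO_firstDefect_sub_firstDefect (hk : k ≠ 0) (h0 : c 0 = (1, 0))
    (h : ∀ j < k, c j = c' j) :
    (fun t => firstDefect c k t - firstDefect c' k t - ((c k).2 - (c' k).2) * t ^ k)
      =o[𝓝[>] 0] (· ^ k) := by
  have h0' : c' 0 = (1, 0) := h 0 (Nat.pos_of_ne_zero hk) ▸ h0
  have htan := (hasStrictDerivAt_tan (by simp : cos 0 ≠ 0)).isLittleO_comp_sub_comp
    (tendsto_truncPoly_snd h0) (tendsto_truncPoly_snd h0')
    (isBigO_truncPoly_sub_truncPoly fun j hj => by rw [h j hj])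
  have hR := truncPoly_sub_truncPoly (a := fun j => (c j).1) (b := fun j => (c' j).1)
    fun j hj => by rw [h j hj]
  have hdR := truncPoly_sub_truncPoly (a := fun j => -(j : ℝ) * (c j).1)
    (b := fun j => -(j : ℝ) * (c' j).1) fun j hj => by rw [h j hj]
  have hθk := truncPoly_sub_truncPoly (a := fun j => (c j).2) (b := fun j => (c' j).2)
    fun j hj => by rw [h j hj]
  refine ((htan.add (isLittleO_const_mul_pow_succ (-(k : ℝ) * ((c k).1 - (c' k).1)) k)).sub
    (isLittleO_const_mul_pow_succ (((c k).1 - (c' k).1) / 2) k)).congr_left fun t => ?_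
  simp only [firstDefect, cos_zero]
  linear_combination -(t * hdR t) - hθk t + t / 2 * hR t

theorem isLittleO_secondDefect_sub_secondDefect (hk : k ≠ 0) (h0 : c 0 = (1, 0))
    (h : ∀ j < k, c j = c' j) :
    (fun t => secondDefect n c k t - secondDefect n c' k t
      + ((n : ℝ) - 1) * ((c k).1 - (c' k).1) * t ^ k) =o[𝓝[>] 0] (· ^ k) := by
  have h0' : c' 0 = (1, 0) := h 0 (Nat.pos_of_ne_zero hk) ▸ h0
  have hsec : HasStrictDerivAt (fun x => 1 / cos x) 0 0 := by
    simpa using (hasStrictDerivAt_const 0 (1 : ℝ)).fun_div (hasStrictDerivAt_cos 0) (by simp)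
  have hsec_sub := hsec.isLittleO_comp_sub_comp
    (tendsto_truncPoly_snd h0) (tendsto_truncPoly_snd h0')
    (isBigO_truncPoly_sub_truncPoly fun j hj => by rw [h j hj])
  have hinv_sub := (hasStrictDerivAt_inv one_ne_zero).isLittleO_comp_sub_comp
    (tendsto_truncPoly_fst h0) (tendsto_truncPoly_fst h0')
    (isBigO_truncPoly_sub_truncPoly fun j hj => by rw [h j hj])
  have hRk := truncPoly_sub_truncPoly (a := fun j => (c j).1) (b := fun j => (c' j).1)
    fun j hj => by rw [h j hj]
  have hdθ := truncPoly_sub_truncPoly (a := fun j => -(j : ℝ) * (c j).2)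
    (b := fun j => -(j : ℝ) * (c' j).2) fun j hj => by rw [h j hj]
  refine (((isLittleO_const_mul_pow_succ (-(k : ℝ) * ((c k).2 - (c' k).2)) k).sub
    (hsec_sub.const_mul_left ((n : ℝ) - 1))).add
    (hinv_sub.const_mul_left ((n : ℝ) - 1))).congr_left fun t => ?_
  simp only [secondDefect, one_div]
  linear_combination -(t * hdθ t) + ((n : ℝ) - 1) * hRk t

theorem SolvesToOrder.coeff_eq (hn : n ≠ 1) (hk : k ≠ 0) (h0 : c 0 = (1, 0))
    (h : ∀ j < k, c j = c' j) (hc : SolvesToOrder n c k) (hc' : SolvesToOrder n c' k) :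
    c k = c' k := by
  have hn1 : (n : ℝ) - 1 ≠ 0 := sub_ne_zero.mpr (by exact_mod_cast hn)
  have hθ := eq_zero_of_isLittleO_const_mul_pow (b := (c k).2 - (c' k).2) <|
    ((hc.1.sub hc'.1).sub (isLittleO_firstDefect_sub_firstDefect hk h0 h)).congr_left
      fun t => by ring
  have hR := eq_zero_of_isLittleO_const_mul_pow (b := ((n : ℝ) - 1) * ((c k).1 - (c' k).1)) <|
    ((isLittleO_secondDefect_sub_secondDefect (n := n) hk h0 h).sub
      (hc.2.sub hc'.2)).congr_left fun t => by ring
  exact Prod.ext (sub_eq_zero.mp ((mul_eq_zero.mp hR).resolve_left hn1)) (sub_eq_zero.mp hθ)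

theorem SolvesToOrder.update_succ (hn : n ≠ 1) (h0 : c 0 = (1, 0)) {a₁ a₂ : ℝ}
    (h₁ : (fun t => firstDefect c k t - a₁ * t ^ (k + 1)) =o[𝓝[>] 0] (· ^ (k + 1)))
    (h₂ : (fun t => secondDefect n c k t - a₂ * t ^ (k + 1)) =o[𝓝[>] 0] (· ^ (k + 1))) :
    SolvesToOrder n (Function.update c (k + 1) (a₂ / ((n : ℝ) - 1), -a₁)) (k + 1) := by
  have hn1 : (n : ℝ) - 1 ≠ 0 := sub_ne_zero.mpr (by exact_mod_cast hn)
  have h0' : Function.update c (k + 1) (a₂ / ((n : ℝ) - 1), -a₁) 0 = (1, 0) := by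
    rw [Function.update_of_ne (by omega), h0]
  have hlow : ∀ j < k + 1, Function.update c (k + 1) (a₂ / ((n : ℝ) - 1), -a₁) j
      = Function.update c (k + 1) 0 j := fun j hj => by
    rw [Function.update_of_ne (by omega), Function.update_of_ne (by omega)]
  constructor
  · refine ((isLittleO_firstDefect_sub_firstDefect k.add_one_ne_zero h0' hlow).add
      h₁).congr_left fun t => ?_
    rw [firstDefect_update_succ_zero]
    simp only [Function.update_self, Prod.snd_zero]
    ring
  · refine ((isLittleO_secondDefect_sub_secondDefect (n := n) k.add_one_ne_zero h0' hlow).add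
      h₂).congr_left fun t => ?_
    rw [secondDefect_update_succ_zero]
    simp only [Function.update_self, Prod.fst_zero]
    field_simp
    ring

theorem firstDefect_zero (h0 : c 0 = (1, 0)) :
    firstDefect c 0 = fun t => -(1 / 2) * t ^ (0 + 1) := by
  funext t
  simp [firstDefect, truncPoly, h0]
  ring

theorem secondDefect_zero (h0 : c 0 = (1, 0)) : secondDefect n c 0 = 0 := by
  funext t
  simp [secondDefect, truncPoly, h0]

theorem solvesToOrder_zero (h0 : c 0 = (1, 0)) : SolvesToOrder n c 0 := by
  rw [SolvesToOrder, firstDefect_zero h0, secondDefect_zero h0]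
  exact ⟨isLittleO_const_mul_pow_succ _ 0, isLittleO_zero _ _⟩

theorem solvesToOrder_update_one (hn : n ≠ 1) (h0 : c 0 = (1, 0)) :
    SolvesToOrder n (Function.update c 1 (0, 1 / 2)) 1 := by
  have h := SolvesToOrder.update_succ (k := 0) (a₁ := -(1 / 2)) (a₂ := 0) hn h0
    (by simp [firstDefect_zero h0]) (by simp [secondDefect_zero h0])
  rwa [zero_div, neg_neg] at h

theorem exists_solvesToOrder_le (hn : n ≠ 1) (K : ℕ) :
    ∃ c : ℕ → ℝ × ℝ, c 0 = (1, 0) ∧ c 1 = (0, 1 / 2) ∧ ∀ m ≤ K + 1, SolvesToOrder n c m := by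
  induction K with
  | zero =>
    refine ⟨Function.update (fun _ => (1, 0)) 1 (0, 1 / 2), rfl, rfl, fun m hm => ?_⟩
    interval_cases m
    · exact solvesToOrder_zero rfl
    · exact solvesToOrder_update_one hn rfl
  | succ K ih =>
    obtain ⟨c, hc0, hc1, hc⟩ := ih
    obtain ⟨a₁, ha₁⟩ :=
      (analyticAt_firstDefect hc0).exists_isLittleO_sub_mul_pow_succ (hc (K + 1) le_rfl).1
    obtain ⟨a₂, ha₂⟩ :=
      (analyticAt_secondDefect hc0).exists_isLittleO_sub_mul_pow_succ (hc (K + 1) le_rfl).2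
    refine ⟨Function.update c (K + 2) (a₂ / ((n : ℝ) - 1), -a₁), ?_, ?_, fun m hm => ?_⟩
    · rwa [Function.update_of_ne (by omega)]
    · rwa [Function.update_of_ne (by omega)]
    rcases hm.lt_or_eq with hm | rfl
    · exact (hc m (by omega)).congr fun j hj => (Function.update_of_ne (by omega) _ _).symm
    · exact SolvesToOrder.update_succ hn hc0 ha₁ ha₂

theorem SolvesToOrder.eqOn_le {c' : ℕ → ℝ × ℝ} (hn : n ≠ 1) (h0 : c 0 = (1, 0))
    (h0' : c' 0 = (1, 0)) {K : ℕ} (hc : ∀ m ≤ K, SolvesToOrder n c m)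
    (hc' : ∀ m ≤ K, SolvesToOrder n c' m) : ∀ j ≤ K, c j = c' j := by
  induction K with
  | zero => intro j hj; rw [Nat.le_zero.mp hj, h0, h0']
  | succ K ih =>
    have hlow := ih (fun m hm => hc m (by omega)) (fun m hm => hc' m (by omega))
    intro j hj
    rcases hj.lt_or_eq with hj | rfl
    · exact hlow j (by omega)
    · exact SolvesToOrder.coeff_eq hn K.add_one_ne_zero h0 (fun j hj => hlow j (by omega))
        (hc _ le_rfl) (hc' _ le_rfl)

end

theorem exists_unique_formal_solution (n : ℕ) (hn : 2 ≤ n) :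
    ∃! c : ℕ → ℝ × ℝ,
      c 0 = (1, 0) ∧ c 1 = (0, 1 / 2) ∧ IsFormalSolution n c := by
  have hn1 : n ≠ 1 := by omega
  simp only [isFormalSolution_iff_forall_solvesToOrder]
  choose d hd0 hd1 hd using exists_solvesToOrder_le hn1
  have hdiag : ∀ K, ∀ j ≤ K, d j j = d K j := fun K j hj =>
    SolvesToOrder.eqOn_le hn1 (hd0 j) (hd0 K) (fun m hm => hd j m (by omega))
      (fun m hm => hd K m (by omega)) j le_rfl
  refine ⟨fun j => d j j, ⟨hd0 0, hd1 1, fun k => ?_⟩, ?_⟩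
  · exact (hd k k (by omega)).congr fun j hj => (hdiag k j hj).symm
  · rintro c ⟨hc0, -, hc⟩
    funext j
    exact SolvesToOrder.eqOn_le hn1 hc0 (hd0 j) (fun m _ => hc m) (fun m hm => hd j m (by omega))
      j le_rfl
end

section
/- In the unique formal singular solution R(Z) = Σ_k R_k Z^(-k), θ(Z) = Σ_k θ_k Z^(-k) of the system dR/dZ = -tan θ + R/(2Z), dθ/dZ = (n-1)(1/cos θ - 1/R), the coefficients satisfy R_k = 0 for all odd k and θ_k = 0 for all even k. -/
/-!
In the variable `x = 1 / Z` the residuals of the truncated series are analytic at `x = 0`, so a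
bound `o(x ^ k)` as `x → 0⁺` holds on both sides of `0`. The system is invariant under
`(R, θ)(Z) ↦ (R(-Z), -θ(-Z))`, hence `((-1) ^ j R_j, -(-1) ^ j θ_j)` is again a formal solution.
The order-`0` equation forces `tan θ₀ = 0`, so both solutions start at `(R₀, 0)`, and they coincide:
the `k`-th coefficients enter the order-`k` residuals linearly, through `tan' θ₀ = 1 / cos² θ₀` and
`(n - 1) (1 / R)' (R₀) = -(n - 1) / R₀²`, both nonzero.
-/

open Real Filter

open Asymptotics Topology

lemma Real.analyticAt_tan {x : ℝ} (h : cos x ≠ 0) : AnalyticAt ℝ tan x := by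
  rw [show tan = fun y => sin y / cos y from funext tan_eq_sin_div_cos]
  exact analyticAt_sin.div analyticAt_cos h

lemma eq_zero_of_const_mul_pow_isLittleO {a : ℝ} {k : ℕ}
    (h : (fun x : ℝ => a * x ^ k) =o[𝓝[>] 0] (· ^ k)) : a = 0 := by
  by_contra ha
  have hne : ∀ᶠ x in 𝓝[>] (0 : ℝ), x ^ k ≠ 0 := by
    filter_upwards [self_mem_nhdsWithin] with x (hx : 0 < x) using pow_ne_zero k hx.ne'
  exact isLittleO_irrefl hne.frequently ((isLittleO_const_mul_left_iff ha).mp h)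

lemma HasStrictDerivAt.mul_eq_zero_of_isLittleO {F : ℝ → ℝ} {F' a δ : ℝ} {k : ℕ}
    {u v : ℝ → ℝ} (hF : HasStrictDerivAt F F' a) (hu : Tendsto u (𝓝[>] 0) (𝓝 a))
    (hv : Tendsto v (𝓝[>] 0) (𝓝 a)) (huv : ∀ x, u x - v x = δ * x ^ k)
    (h : (fun x => F (u x) - F (v x)) =o[𝓝[>] 0] (· ^ k)) : F' * δ = 0 := by
  have hlin : (fun x => F (u x) - F (v x) - F' * (δ * x ^ k)) =o[𝓝[>] 0] (· ^ k) := by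
    have := hF.hasStrictFDerivAt.isLittleO.comp_tendsto (hu.prodMk_nhds hv)
    simp only [Function.comp_def, ContinuousLinearMap.toSpanSingleton_apply, smul_eq_mul,
      huv] at this
    refine (this.trans_isBigO ((isBigO_refl _ _).const_mul_left δ)).congr_left fun x => ?_
    ring
  exact eq_zero_of_const_mul_pow_isLittleO ((h.sub hlin).congr_left fun x => by ring)

lemma AnalyticAt.isLittleO_nhds_of_nhdsGT {f : ℝ → ℝ} {k : ℕ} (hf : AnalyticAt ℝ f 0)
    (h : f =o[𝓝[>] 0] (· ^ k)) : f =o[𝓝 0] (· ^ k) := by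
  rcases eq_or_ne (analyticOrderAt f 0) ⊤ with htop | hfin
  · exact (isLittleO_zero _ _).congr' ((analyticOrderAt_eq_top.mp htop).mono fun x hx => hx.symm)
      EventuallyEq.rfl
  lift analyticOrderAt f 0 to ℕ using hfin with m hm
  obtain ⟨g, hg, hg0, hfg⟩ := hf.analyticOrderAt_eq_natCast.mp hm.symm
  simp only [sub_zero, smul_eq_mul] at hfg
  -- `f = x ^ m g` with `g 0 ≠ 0`, so the one-sided bound forces `k < m`.
  have hkm : k < m := by
    by_contra! hmk
    have hfm : f =o[𝓝[>] 0] (· ^ m) := h.trans_isBigO <| isBigO_iff.mpr ⟨1, by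
      filter_upwards [Ioo_mem_nhdsGT (zero_lt_one' ℝ)] with x hx
      simp only [norm_pow, norm_eq_abs, abs_of_pos hx.1, one_mul]
      exact pow_le_pow_of_le_one hx.1.le hx.2.le hmk⟩
    have hg_lim : Tendsto g (𝓝[>] 0) (𝓝 0) := by
      refine hfm.tendsto_div_nhds_zero.congr' ?_
      filter_upwards [hfg.filter_mono nhdsWithin_le_nhds, self_mem_nhdsWithin]
        with x hx (hx0 : 0 < x)
      rw [hx, mul_div_cancel_left₀ _ (pow_ne_zero m hx0.ne')]
    exact hg0 (tendsto_nhds_unique hg.continuousAt.continuousWithinAt.tendsto hg_lim)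
  have hsmall : Tendsto (fun x => x ^ (m - k) * g x) (𝓝 0) (𝓝 0) := by
    have := ((continuous_pow (m - k)).continuousAt.mul hg.continuousAt).tendsto
    rwa [Pi.mul_apply, zero_pow (Nat.sub_ne_zero_of_lt hkm), zero_mul] at this
  have := (isBigO_refl (· ^ k) (𝓝 (0 : ℝ))).mul_isLittleO ((isLittleO_one_iff ℝ).mpr hsmall)
  refine this.congr' ?_ (by simp)
  filter_upwards [hfg] with x hx
  rw [hx, ← mul_assoc, ← pow_add, Nat.add_sub_cancel' hkm.le]

lemma AnalyticAt.isLittleO_comp_neg {f : ℝ → ℝ} {k : ℕ} (hf : AnalyticAt ℝ f 0)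
    (h : f =o[𝓝[>] 0] (· ^ k)) : (fun x => f (-x)) =o[𝓝[>] 0] (· ^ k) := by
  have hneg : Tendsto (fun x : ℝ => -x) (𝓝[>] 0) (𝓝 0) :=
    (continuous_neg.tendsto' 0 0 neg_zero).mono_left nhdsWithin_le_nhds
  exact ((hf.isLittleO_nhds_of_nhdsGT h).comp_tendsto hneg).trans_isBigO
    (isBigO_of_le _ fun x => by simp [norm_pow, norm_neg])

lemma isLittleO_nhdsGT_of_comp_inv {f : ℝ → ℝ} {k : ℕ}
    (h : (fun Z => f Z⁻¹) =o[atTop] fun Z : ℝ => Z ^ (-(k : ℤ))) : f =o[𝓝[>] 0] (· ^ k) := by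
  simpa [Function.comp_def, zpow_neg] using h.comp_tendsto tendsto_inv_nhdsGT_zero

def partialSum (a : ℕ → ℝ) (k : ℕ) (x : ℝ) : ℝ := ∑ j ∈ Finset.range (k + 1), a j * x ^ j

namespace partialSum

@[simp]
lemma apply_zero (a : ℕ → ℝ) (k : ℕ) : partialSum a k 0 = a 0 := by
  simp [partialSum, Finset.sum_range_succ']

lemma continuous (a : ℕ → ℝ) (k : ℕ) : Continuous (partialSum a k) := by
  unfold partialSum; fun_prop

@[fun_prop]
lemma analyticAt (a : ℕ → ℝ) (k : ℕ) (x : ℝ) : AnalyticAt ℝ (partialSum a k) x := by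
  unfold partialSum; fun_prop

lemma tendsto_nhdsGT (a : ℕ → ℝ) (k : ℕ) : Tendsto (partialSum a k) (𝓝[>] 0) (𝓝 (a 0)) := by
  simpa using ((continuous a k).tendsto 0).mono_left nhdsWithin_le_nhds

lemma neg (a : ℕ → ℝ) (k : ℕ) (x : ℝ) : partialSum (fun j => -a j) k x = -partialSum a k x := by
  simp [partialSum, Finset.sum_neg_distrib, neg_mul]

lemma neg_one_pow_mul (a : ℕ → ℝ) (k : ℕ) (x : ℝ) :
    partialSum (fun j => (-1) ^ j * a j) k x = partialSum a k (-x) :=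
  Finset.sum_congr rfl fun j _ => by rw [neg_pow]; ring

lemma sub_of_forall_lt {a b : ℕ → ℝ} {k : ℕ} (h : ∀ j < k, a j = b j) (x : ℝ) :
    partialSum a k x - partialSum b k x = (a k - b k) * x ^ k := by
  have hlow : ∑ j ∈ Finset.range k, a j * x ^ j = ∑ j ∈ Finset.range k, b j * x ^ j :=
    Finset.sum_congr rfl fun j hj => by rw [h j (Finset.mem_range.mp hj)]
  simp only [partialSum, Finset.sum_range_succ, hlow]
  ring

lemma inv_eq (a : ℕ → ℝ) (k : ℕ) (Z : ℝ) :
    partialSum a k Z⁻¹ = ∑ j ∈ Finset.range (k + 1), a j * Z ^ (-(j : ℤ)) := by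
  simp [partialSum, zpow_neg, inv_pow]

lemma congr {a b : ℕ → ℝ} {k : ℕ} (h : ∀ j ≤ k, a j = b j) (x : ℝ) :
    partialSum a k x = partialSum b k x :=
  Finset.sum_congr rfl fun j hj => by rw [h j (Nat.lt_succ_iff.mp (Finset.mem_range.mp hj))]

lemma neg_inv_mul_inv_eq (a : ℕ → ℝ) (k : ℕ) (Z : ℝ) :
    -Z⁻¹ * partialSum (fun j => j * a j) k Z⁻¹
      = ∑ j ∈ Finset.range (k + 1), -(j : ℝ) * a j * Z ^ (-(j : ℤ) - 1) := by
  simp only [partialSum, Finset.mul_sum]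
  refine Finset.sum_congr rfl fun j _ => ?_
  rw [show -(j : ℤ) - 1 = -((j + 1 : ℕ) : ℤ) by push_cast; ring, zpow_neg, zpow_natCast, inv_pow,
    pow_succ]
  ring

end partialSum

/-- Residuals of the system in the variable `x = 1 / Z`, in which `d/dZ = -x² d/dx`, evaluated at
the partial sums of order `k`. -/
noncomputable def residualR (c : ℕ → ℝ × ℝ) (k : ℕ) (x : ℝ) : ℝ :=
  -x * partialSum (fun j => j * (c j).1) k x + tan (partialSum (fun j => (c j).2) k x)
    - x * partialSum (fun j => (c j).1) k x / 2

noncomputable def residualθ (n : ℕ) (c : ℕ → ℝ × ℝ) (k : ℕ) (x : ℝ) : ℝ :=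
  -x * partialSum (fun j => j * (c j).2) k x
    - ((n : ℝ) - 1) * (1 / cos (partialSum (fun j => (c j).2) k x)
      - 1 / partialSum (fun j => (c j).1) k x)

def IsFormalSolutionAtZero (n : ℕ) (c : ℕ → ℝ × ℝ) : Prop :=
  ∀ k : ℕ, residualR c k =o[𝓝[>] 0] (· ^ k) ∧ residualθ n c k =o[𝓝[>] 0] (· ^ k)

lemma IsFormalSolution.atZero {n : ℕ} {c : ℕ → ℝ × ℝ} (hc : IsFormalSolution n c) :
    IsFormalSolutionAtZero n c := by
  intro k
  obtain ⟨hR, hθ⟩ := hc k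
  constructor
  · refine isLittleO_nhdsGT_of_comp_inv (hR.congr_left fun Z => ?_)
    simp only [residualR, partialSum.inv_eq, ← partialSum.neg_inv_mul_inv_eq]
    ring
  · refine isLittleO_nhdsGT_of_comp_inv (hθ.congr_left fun Z => ?_)
    simp only [residualθ, partialSum.inv_eq, ← partialSum.neg_inv_mul_inv_eq]

lemma analyticAt_residualR {c : ℕ → ℝ × ℝ} (k : ℕ) (hcos : cos (c 0).2 ≠ 0) :
    AnalyticAt ℝ (residualR c k) 0 := by
  have htan : AnalyticAt ℝ (fun x => tan (partialSum (fun j => (c j).2) k x)) 0 :=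
    (analyticAt_tan (by simpa using hcos)).comp (by fun_prop)
  unfold residualR
  fun_prop

lemma analyticAt_residualθ (n : ℕ) {c : ℕ → ℝ × ℝ} (k : ℕ) (hcos : cos (c 0).2 ≠ 0)
    (hR : (c 0).1 ≠ 0) : AnalyticAt ℝ (residualθ n c k) 0 := by
  unfold residualθ
  fun_prop (disch := simpa)

lemma IsFormalSolutionAtZero.tan_snd_zero {n : ℕ} {c : ℕ → ℝ × ℝ}
    (hc : IsFormalSolutionAtZero n c) (hcos : cos (c 0).2 ≠ 0) : tan (c 0).2 = 0 := by
  have hlim : Tendsto (residualR c 0) (𝓝[>] 0) (𝓝 0) := by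
    simpa using (hc 0).1.tendsto_div_nhds_zero
  have hcont := (analyticAt_residualR 0 hcos).continuousAt.continuousWithinAt (s := Set.Ioi 0)
  simpa [residualR] using tendsto_nhds_unique hcont.tendsto hlim

/-- The coefficients of `R(-Z)` and `-θ(-Z)`; the system is invariant under this substitution. -/
def reflect (c : ℕ → ℝ × ℝ) : ℕ → ℝ × ℝ := fun j => ((-1) ^ j * (c j).1, -((-1) ^ j * (c j).2))

lemma residualR_reflect (c : ℕ → ℝ × ℝ) (k : ℕ) (x : ℝ) :
    residualR (reflect c) k x = -residualR c k (-x) := by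
  have hd : (fun j : ℕ => (j : ℝ) * (reflect c j).1) = fun j => (-1) ^ j * (j * (c j).1) := by
    funext j; simp only [reflect]; ring
  have hR : (fun j => (reflect c j).1) = fun j => (-1) ^ j * (c j).1 := rfl
  have hθ : (fun j => (reflect c j).2) = fun j => -((-1) ^ j * (c j).2) := rfl
  simp only [residualR, hd, hR, hθ, partialSum.neg, partialSum.neg_one_pow_mul, tan_neg]
  ring

lemma residualθ_reflect (n : ℕ) (c : ℕ → ℝ × ℝ) (k : ℕ) (x : ℝ) :
    residualθ n (reflect c) k x = residualθ n c k (-x) := by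
  have hd : (fun j : ℕ => (j : ℝ) * (reflect c j).2) = fun j => -((-1) ^ j * (j * (c j).2)) := by
    funext j; simp only [reflect]; ring
  have hR : (fun j => (reflect c j).1) = fun j => (-1) ^ j * (c j).1 := rfl
  have hθ : (fun j => (reflect c j).2) = fun j => -((-1) ^ j * (c j).2) := rfl
  simp only [residualθ, hd, hR, hθ, partialSum.neg, partialSum.neg_one_pow_mul, cos_neg]
  ring

lemma IsFormalSolutionAtZero.reflect {n : ℕ} {c : ℕ → ℝ × ℝ} (hc : IsFormalSolutionAtZero n c)
    (hcos : cos (c 0).2 ≠ 0) (hR : (c 0).1 ≠ 0) : IsFormalSolutionAtZero n (reflect c) := by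
  intro k
  obtain ⟨hcR, hcθ⟩ := hc k
  exact ⟨((analyticAt_residualR k hcos).isLittleO_comp_neg hcR).neg_left.congr_left
      fun x => (residualR_reflect c k x).symm,
    ((analyticAt_residualθ n k hcos hR).isLittleO_comp_neg hcθ).congr_left
      fun x => (residualθ_reflect n c k x).symm⟩

lemma residualR_sub_residualR {c d : ℕ → ℝ × ℝ} {k : ℕ} (h : ∀ j < k, (c j).1 = (d j).1)
    (x : ℝ) :
    residualR c k x - residualR d k x
      = tan (partialSum (fun j => (c j).2) k x) - tan (partialSum (fun j => (d j).2) k x)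
        - (k + 1 / 2) * ((c k).1 - (d k).1) * x ^ (k + 1) := by
  have hder := partialSum.sub_of_forall_lt (a := fun j => j * (c j).1) (b := fun j => j * (d j).1)
    (fun j hj => by rw [h j hj]) x
  have hval := partialSum.sub_of_forall_lt h x
  simp only [residualR]
  linear_combination (-x) * hder - x / 2 * hval

lemma residualθ_sub_residualθ (n : ℕ) {c d : ℕ → ℝ × ℝ} {k : ℕ}
    (hθ : ∀ j ≤ k, (c j).2 = (d j).2) (x : ℝ) :
    residualθ n c k x - residualθ n d k x
      = ((n : ℝ) - 1) * (partialSum (fun j => (c j).1) k x)⁻¹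
        - ((n : ℝ) - 1) * (partialSum (fun j => (d j).1) k x)⁻¹ := by
  simp only [residualθ, one_div, partialSum.congr hθ,
    partialSum.congr (a := fun j => j * (c j).2) (b := fun j => j * (d j).2)
      (fun j hj => by rw [hθ j hj])]
  ring

lemma IsFormalSolutionAtZero.eq_of_forall_lt {n : ℕ} (hn : (n : ℝ) - 1 ≠ 0)
    {c d : ℕ → ℝ × ℝ} (hc : IsFormalSolutionAtZero n c) (hd : IsFormalSolutionAtZero n d)
    (hcos : cos (c 0).2 ≠ 0) (hR : (c 0).1 ≠ 0) {k : ℕ} (hk : 0 < k)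
    (hlt : ∀ j < k, c j = d j) : c k = d k := by
  have hRlt : ∀ j < k, (c j).1 = (d j).1 := fun j hj => congrArg Prod.fst (hlt j hj)
  have hθlt : ∀ j < k, (c j).2 = (d j).2 := fun j hj => congrArg Prod.snd (hlt j hj)
  obtain ⟨hcR, hcθ⟩ := hc k
  obtain ⟨hdR, hdθ⟩ := hd k
  have hθk : (c k).2 = (d k).2 := by
    have htan : (fun x => tan (partialSum (fun j => (c j).2) k x)
        - tan (partialSum (fun j => (d j).2) k x)) =o[𝓝[>] 0] (· ^ k) := by
      have hhigher : (fun x : ℝ => x ^ (k + 1)) =o[𝓝[>] 0] (· ^ k) :=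
        (isLittleO_pow_pow k.lt_succ_self).mono nhdsWithin_le_nhds
      refine ((hcR.sub hdR).add (hhigher.const_mul_left ((k + 1 / 2) * ((c k).1 - (d k).1))))
        |>.congr_left fun x => ?_
      rw [residualR_sub_residualR hRlt]
      ring
    have := (hasStrictDerivAt_tan hcos).mul_eq_zero_of_isLittleO
      (partialSum.tendsto_nhdsGT _ k) (hθlt 0 hk ▸ partialSum.tendsto_nhdsGT _ k)
      (partialSum.sub_of_forall_lt hθlt) htan
    exact sub_eq_zero.mp
      ((mul_eq_zero.mp this).resolve_left (one_div_ne_zero (pow_ne_zero 2 hcos)))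
  have hRk : (c k).1 = (d k).1 := by
    have hθle : ∀ j ≤ k, (c j).2 = (d j).2 := fun j hj =>
      (Nat.lt_or_eq_of_le hj).elim (hθlt j) fun hjk => hjk ▸ hθk
    have := ((hasStrictDerivAt_inv hR).const_mul ((n : ℝ) - 1)).mul_eq_zero_of_isLittleO
      (partialSum.tendsto_nhdsGT _ k) (hRlt 0 hk ▸ partialSum.tendsto_nhdsGT _ k)
      (partialSum.sub_of_forall_lt hRlt)
      ((hcθ.sub hdθ).congr_left (residualθ_sub_residualθ n hθle))
    exact sub_eq_zero.mp ((mul_eq_zero.mp this).resolve_left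
      (mul_ne_zero hn (neg_ne_zero.mpr (inv_ne_zero (pow_ne_zero 2 hR)))))
  exact Prod.ext hRk hθk

lemma IsFormalSolutionAtZero.eq {n : ℕ} (hn : (n : ℝ) - 1 ≠ 0) {c d : ℕ → ℝ × ℝ}
    (hc : IsFormalSolutionAtZero n c) (hd : IsFormalSolutionAtZero n d)
    (hcos : cos (c 0).2 ≠ 0) (hR : (c 0).1 ≠ 0) (h0 : c 0 = d 0) : c = d := by
  funext k
  induction k using Nat.strong_induction_on with
  | _ k ih =>
    rcases k.eq_zero_or_pos with rfl | hk
    · exact h0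
    · exact hc.eq_of_forall_lt hn hd hcos hR hk ih

theorem formal_solution_parity (n : ℕ) (hn : 2 ≤ n) (c : ℕ → ℝ × ℝ)
    (h0R : 0 < (c 0).1) (h0θ : (c 0).2 ∈ Set.Ioo (-(π / 2)) (π / 2))
    (hc : IsFormalSolution n c) :
    (∀ k : ℕ, Odd k → (c k).1 = 0) ∧ (∀ k : ℕ, Even k → (c k).2 = 0) := by
  have hcos : cos (c 0).2 ≠ 0 := (cos_pos_of_mem_Ioo h0θ).ne'
  have hn1 : (n : ℝ) - 1 ≠ 0 := by
    have : (2 : ℝ) ≤ n := by exact_mod_cast hn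
    linarith
  have hc' := hc.atZero
  have hθ0 : (c 0).2 = 0 :=
    injOn_tan h0θ ⟨by linarith [pi_div_two_pos], pi_div_two_pos⟩
      (by rw [hc'.tan_snd_zero hcos, tan_zero])
  have hsymm : c = reflect c :=
    hc'.eq hn1 (hc'.reflect hcos h0R.ne') hcos h0R.ne' (by simp [reflect, hθ0, Prod.ext_iff])
  refine ⟨fun k hk => ?_, fun k hk => ?_⟩
  · have := congrArg (fun c => (c k).1) hsymm
    simp only [reflect, hk.neg_one_pow] at this
    linarith
  · have := congrArg (fun c => (c k).2) hsymm
    simp only [reflect, hk.neg_one_pow] at this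
    linarith
end

section
/- Suppose (R,θ) and (R̃,θ̃) are two solutions of dR/dZ = -tan θ + R/(2Z), dθ/dZ = (n-1)(1/cos θ - 1/R) on (0,∞) in R > 0, θ ∈ (-π/2,π/2), both converging to (1,0) as Z → ∞, and suppose (R,θ) satisfies R(Z) = 1 + o(1/Z) and θ(Z) = 1/(2Z) + o(1/Z) as Z → ∞. Set ρ = R̃ - R, φ = θ̃ - θ, and h(Z) = H(1+ρ(Z), φ(Z)) with H(R,θ) = R^(n-1)(cos θ - (n-1)R/n). Then dh/dZ = -(n-1)·(ρ²+φ²)/(2Z)·(1 + o(1)) as Z → ∞. -/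
open Real Filter

open Topology Asymptotics

/-!
`H` is a first integral of the autonomous system `R' = -tan θ`, `θ' = (n - 1) (1 / cos θ - 1 / R)`,
so along `(1 + ρ, φ)` the derivative of `h` only sees the discards:
`h' = ∂_R H · ε_ρ + ∂_θ H · ε_φ`. The gradient of `H` vanishes at `(1, 0)` with Hessian
`diag (-(n - 1), -1)`, so `∂_R H = -(n - 1) ρ + o(|(ρ, φ)|)` and `∂_θ H = -φ + o(|(ρ, φ)|)`.
The addition formulas for `tan` and `1 / cos`, together with `R = 1 + o(1/Z)` and
`θ = 1/(2Z) + o(1/Z)`, give `ε_ρ = ρ/(2Z) + o(|(ρ, φ)|)/Z` and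
`ε_φ = (n - 1) φ/(2Z) + o(|(ρ, φ)|)/Z`. Multiplying out, every error term is `o(ρ² + φ²)/Z`.
-/

section LocalExpansions

variable {α : Type*} {l : Filter α} {g : α → ℝ}

lemma isLittleO_comp_of_hasDerivAt {f : ℝ → ℝ} {f' : ℝ} (hf : HasDerivAt f f' 0)
    (hg : Tendsto g l (𝓝 0)) : (fun z => f (g z) - f 0 - f' * g z) =o[l] g := by
  have h := hf.isLittleO.comp_tendsto hg
  simp only [Function.comp_def, sub_zero, smul_eq_mul] at h
  simpa only [mul_comm] using h

lemma isEquivalent_tan_comp (hg : Tendsto g l (𝓝 0)) : (fun z => tan (g z)) ~[l] g := by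
  have h := isLittleO_comp_of_hasDerivAt (hasDerivAt_tan (x := 0) (by simp)) hg
  simp only [tan_zero, cos_zero, sub_zero, one_pow, div_one, one_mul] at h
  exact h.isEquivalent

lemma isLittleO_cos_comp_sub_one (hg : Tendsto g l (𝓝 0)) :
    (fun z => cos (g z) - 1) =o[l] g := by
  simpa using isLittleO_comp_of_hasDerivAt (hasDerivAt_cos 0) hg

lemma isLittleO_inv_cos_comp_sub_one (hg : Tendsto g l (𝓝 0)) :
    (fun z => 1 / cos (g z) - 1) =o[l] g := by
  simpa using isLittleO_comp_of_hasDerivAt ((hasDerivAt_cos 0).inv (by simp)) hg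

end LocalExpansions

lemma tan_add_tan_sub_tan_add {a b : ℝ} (ha : cos a ≠ 0) (hb : cos b ≠ 0)
    (hab : cos (a + b) ≠ 0) : tan a + tan b - tan (a + b) = -(tan a * tan b * tan (a + b)) := by
  rw [cos_add] at hab
  simp only [tan_eq_sin_div_cos, sin_add, cos_add]
  field_simp
  ring

lemma inv_cos_add_sub {a b : ℝ} (ha : cos a ≠ 0) (hb : cos b ≠ 0) (hab : cos (a + b) ≠ 0) :
    1 / cos (a + b) - 1 / cos a - 1 / cos b + 1
      = tan a * tan b / cos (a + b) + (1 / cos a - 1) * (1 / cos b - 1) := by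
  rw [cos_add] at hab ⊢
  simp only [tan_eq_sin_div_cos]
  field_simp
  ring

lemma inv_sub_inv_add_inv_sub_one {R ρ : ℝ} (hR : R ≠ 0) (hRρ : R + ρ ≠ 0) (hρ : 1 + ρ ≠ 0) :
    1 / R - 1 / (R + ρ) + 1 / (1 + ρ) - 1
      = ρ * (1 - R) * ((1 + R + ρ) / (R * (R + ρ) * (1 + ρ))) := by
  field_simp
  ring

noncomputable def dH_dR (n : ℕ) (R θ : ℝ) : ℝ := ((n : ℝ) - 1) * R ^ (n - 2) * (cos θ - R)

noncomputable def dH_dθ (n : ℕ) (R θ : ℝ) : ℝ := -(R ^ (n - 1) * sin θ)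

section

variable {n : ℕ}

lemma hasDerivAt_H_comp_s15 (hn : 2 ≤ n) {a b : ℝ → ℝ} {a' b' z : ℝ} (ha : HasDerivAt a a' z)
    (hb : HasDerivAt b b' z) :
    HasDerivAt (fun z => H n (a z) (b z))
      (dH_dR n (a z) (b z) * a' + dH_dθ n (a z) (b z) * b') z := by
  obtain ⟨m, rfl⟩ : ∃ m, n = m + 2 := ⟨n - 2, by omega⟩
  refine ((ha.pow (m + 1)).mul (hb.cos.sub ((ha.const_mul _).div_const _))).congr_deriv ?_
  simp only [dH_dR, dH_dθ, Pi.sub_apply, Pi.pow_apply, Nat.add_sub_cancel,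
    show m + 2 - 1 = m + 1 by omega]
  push_cast
  field_simp
  ring

lemma dH_dR_mul_add_dH_dθ_mul_eq_zero (hn : 2 ≤ n) {R θ : ℝ} (hR : R ≠ 0) (hθ : cos θ ≠ 0) :
    dH_dR n R θ * -tan θ + dH_dθ n R θ * (((n : ℝ) - 1) * (1 / cos θ - 1 / R)) = 0 := by
  obtain ⟨m, rfl⟩ : ∃ m, n = m + 2 := ⟨n - 2, by omega⟩
  simp only [dH_dR, dH_dθ, tan_eq_sin_div_cos, Nat.add_sub_cancel,
    show m + 2 - 1 = m + 1 by omega]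
  field_simp
  ring

lemma hasDerivAt_H_comp_discards (hn : 2 ≤ n) {a b : ℝ → ℝ} {a' b' z : ℝ}
    (ha : HasDerivAt a a' z) (hb : HasDerivAt b b' z) (ha0 : a z ≠ 0) (hb0 : cos (b z) ≠ 0) :
    HasDerivAt (fun z => H n (a z) (b z))
      (dH_dR n (a z) (b z) * (a' + tan (b z))
        + dH_dθ n (a z) (b z) * (b' - ((n : ℝ) - 1) * (1 / cos (b z) - 1 / a z))) z :=
  (hasDerivAt_H_comp_s15 hn ha hb).congr_deriv
    (by linear_combination dH_dR_mul_add_dH_dθ_mul_eq_zero hn ha0 hb0)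

end

section Asymptotics

variable {α : Type*} {l : Filter α}

lemma eventually_cos_ne_zero {g : α → ℝ} (hg : Tendsto g l (𝓝 0)) : ∀ᶠ z in l, cos (g z) ≠ 0 :=
  ((continuous_cos.tendsto' 0 1 cos_zero).comp hg).eventually_ne one_ne_zero

variable {ρ φ : α → ℝ}

lemma isBigO_fst_norm : ρ =O[l] fun z => ‖(ρ z, φ z)‖ :=
  isBigO_norm_right.2 isBigO_fst_prod

lemma isBigO_snd_norm : φ =O[l] fun z => ‖(ρ z, φ z)‖ :=
  isBigO_norm_right.2 isBigO_snd_prod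

lemma isBigO_mul_fst_norm (g : α → ℝ) :
    (fun z => g z * ρ z) =O[l] fun z => g z * ‖(ρ z, φ z)‖ :=
  (isBigO_refl g l).mul isBigO_fst_norm

lemma isBigO_mul_snd_norm (g : α → ℝ) :
    (fun z => g z * φ z) =O[l] fun z => g z * ‖(ρ z, φ z)‖ :=
  (isBigO_refl g l).mul isBigO_snd_norm

lemma isLittleO_dH_dR_add (n : ℕ) (hρ : Tendsto ρ l (𝓝 0)) (hφ : Tendsto φ l (𝓝 0)) :
    (fun z => dH_dR n (1 + ρ z) (φ z) + ((n : ℝ) - 1) * ρ z) =o[l]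
      fun z => ‖(ρ z, φ z)‖ := by
  have hpow : Tendsto (fun z => (1 + ρ z) ^ (n - 2)) l (𝓝 1) := by
    simpa using (hρ.const_add 1).pow (n - 2)
  have hcos : (fun z => (1 + ρ z) ^ (n - 2) * (cos (φ z) - 1)) =o[l] fun z => ‖(ρ z, φ z)‖ := by
    simpa only [one_mul] using (hpow.isBigO_one ℝ).mul_isLittleO
      ((isLittleO_cos_comp_sub_one hφ).trans_isBigO isBigO_snd_norm)
  have hlin : (fun z => ρ z * ((1 + ρ z) ^ (n - 2) - 1)) =o[l] fun z => ‖(ρ z, φ z)‖ := by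
    simpa only [mul_one] using isBigO_fst_norm.mul_isLittleO
      ((isLittleO_one_iff ℝ).2 (tendsto_sub_nhds_zero_iff.2 hpow))
  refine ((hcos.sub hlin).const_mul_left ((n : ℝ) - 1)).congr_left fun z => ?_
  simp only [dH_dR]
  ring

lemma isLittleO_dH_dθ_add (n : ℕ) (hρ : Tendsto ρ l (𝓝 0)) (hφ : Tendsto φ l (𝓝 0)) :
    (fun z => dH_dθ n (1 + ρ z) (φ z) + φ z) =o[l] fun z => ‖(ρ z, φ z)‖ := by
  have hpow : Tendsto (fun z => (1 + ρ z) ^ (n - 1) - 1) l (𝓝 0) := by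
    simpa using ((hρ.const_add 1).pow (n - 1)).sub_const 1
  have hsin := isEquivalent_sin.comp_tendsto hφ
  have hsinN : (fun z => sin (φ z)) =O[l] fun z => ‖(ρ z, φ z)‖ :=
    hsin.isBigO.trans isBigO_snd_norm
  have hsub : (fun z => sin (φ z) - φ z) =o[l] fun z => ‖(ρ z, φ z)‖ :=
    hsin.isLittleO.trans_isBigO isBigO_snd_norm
  have hprod : (fun z => ((1 + ρ z) ^ (n - 1) - 1) * sin (φ z)) =o[l]
      fun z => ‖(ρ z, φ z)‖ := by
    simpa only [one_mul] using ((isLittleO_one_iff ℝ).2 hpow).mul_isBigO hsinN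
  refine (hsub.add hprod).neg_left.congr_left fun z => ?_
  simp only [dH_dθ]
  ring

variable {θ g : α → ℝ}

lemma isLittleO_tan_add_tan_sub_tan_add (hθg : θ =O[l] g) (hθ : Tendsto θ l (𝓝 0))
    (hφ : Tendsto φ l (𝓝 0)) :
    (fun z => tan (θ z) + tan (φ z) - tan (θ z + φ z)) =o[l] fun z => g z * φ z := by
  have hθφ : Tendsto (fun z => θ z + φ z) l (𝓝 0) := by simpa using hθ.add hφ
  have htan : Tendsto (fun z => tan (θ z + φ z)) l (𝓝 0) :=
    (isEquivalent_tan_comp hθφ).symm.tendsto_nhds hθφ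
  have hprod := ((isEquivalent_tan_comp hθ).isBigO.trans hθg).mul
    (isEquivalent_tan_comp hφ).isBigO |>.mul_isLittleO ((isLittleO_one_iff ℝ).2 htan)
  refine hprod.neg_left.congr' ?_ (.of_forall fun z => mul_one _)
  filter_upwards [eventually_cos_ne_zero hθ, eventually_cos_ne_zero hφ,
    eventually_cos_ne_zero hθφ] with z h₁ h₂ h₃
  exact (tan_add_tan_sub_tan_add h₁ h₂ h₃).symm

lemma isLittleO_inv_cos_add_sub (hθg : θ ~[l] g) (hθ : Tendsto θ l (𝓝 0))
    (hφ : Tendsto φ l (𝓝 0)) :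
    (fun z => 1 / cos (θ z + φ z) - 1 / cos (θ z) - 1 / cos (φ z) + 1 - g z * φ z) =o[l]
      fun z => g z * φ z := by
  have hθφ : Tendsto (fun z => θ z + φ z) l (𝓝 0) := by simpa using hθ.add hφ
  have hcos : (fun z => cos (θ z + φ z)) ~[l] fun _ => (1 : ℝ) :=
    (isEquivalent_const_iff_tendsto one_ne_zero).2
      ((continuous_cos.tendsto' 0 1 cos_zero).comp hθφ)
  have hmain : (fun z => tan (θ z) * tan (φ z) / cos (θ z + φ z)) ~[l] fun z => g z * φ z := by
    refine (((isEquivalent_tan_comp hθ).trans hθg).mul (isEquivalent_tan_comp hφ)).div hcos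
      |>.congr_right (.of_forall fun z => ?_)
    simp
  have hsec : (fun z => (1 / cos (θ z) - 1) * (1 / cos (φ z) - 1)) =o[l] fun z => g z * φ z :=
    ((isLittleO_inv_cos_comp_sub_one hθ).trans_isBigO hθg.isBigO).mul_isBigO
      (isLittleO_inv_cos_comp_sub_one hφ).isBigO
  refine (hmain.isLittleO.add hsec).congr' ?_ .rfl
  filter_upwards [eventually_cos_ne_zero hθ, eventually_cos_ne_zero hφ,
    eventually_cos_ne_zero hθφ] with z h₁ h₂ h₃
  rw [Pi.sub_apply, inv_cos_add_sub h₁ h₂ h₃]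
  ring

lemma isLittleO_inv_sub_inv_add_inv_sub_one {R : α → ℝ} (hRg : (fun z => R z - 1) =o[l] g)
    (hR : Tendsto R l (𝓝 1)) (hρ : Tendsto ρ l (𝓝 0)) :
    (fun z => 1 / R z - 1 / (R z + ρ z) + 1 / (1 + ρ z) - 1) =o[l] fun z => g z * ρ z := by
  have hRρ : Tendsto (fun z => R z + ρ z) l (𝓝 1) := by simpa using hR.add hρ
  have h1ρ : Tendsto (fun z => 1 + ρ z) l (𝓝 1) := by simpa using hρ.const_add 1
  have hk : Tendsto (fun z => (1 + R z + ρ z) / (R z * (R z + ρ z) * (1 + ρ z))) l (𝓝 2) := by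
    have h := ((hR.const_add 1).add hρ).div ((hR.mul hRρ).mul h1ρ) (by norm_num)
    norm_num at h
    exact h
  have hprod := (isBigO_refl ρ l).mul_isLittleO hRg.neg_left |>.mul_isBigO (hk.isBigO_one ℝ)
  refine hprod.congr' ?_ (.of_forall fun z => by simp [mul_comm])
  filter_upwards [hR.eventually_ne one_ne_zero, hRρ.eventually_ne one_ne_zero,
    h1ρ.eventually_ne one_ne_zero] with z h₁ h₂ h₃
  rw [inv_sub_inv_add_inv_sub_one h₁ h₂ h₃]
  ring

/-- With `ε_ρ = g ρ + E₁` and `ε_φ = c g φ + E₂`, the sum `A ε_ρ + B ε_φ + c g (ρ² + φ²)` equals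
`(A + c ρ) ε_ρ - c ρ E₁ + (B + φ) ε_φ - φ E₂`, a sum of products `o(|(ρ, φ)|) · O(g |(ρ, φ)|)`. -/
lemma isLittleO_of_discards {A B E₁ E₂ : α → ℝ} {c : ℝ}
    (hA : (fun z => A z + c * ρ z) =o[l] fun z => ‖(ρ z, φ z)‖)
    (hB : (fun z => B z + φ z) =o[l] fun z => ‖(ρ z, φ z)‖)
    (hE₁ : E₁ =o[l] fun z => g z * ‖(ρ z, φ z)‖) (hE₂ : E₂ =o[l] fun z => g z * ‖(ρ z, φ z)‖) :
    (fun z => A z * (g z * ρ z + E₁ z) + B z * (c * (g z * φ z) + E₂ z)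
        + c * (g z * (ρ z ^ 2 + φ z ^ 2))) =o[l] fun z => g z * (ρ z ^ 2 + φ z ^ 2) := by
  have he₁ := (isBigO_mul_fst_norm g).add hE₁.isBigO
  have he₂ := ((isBigO_mul_snd_norm g).const_mul_left c).add hE₂.isBigO
  have hsq : (fun z => ‖(ρ z, φ z)‖ * (g z * ‖(ρ z, φ z)‖)) =O[l]
      fun z => g z * (ρ z ^ 2 + φ z ^ 2) := by
    refine .of_bound 1 (.of_forall fun z => ?_)
    have hN : ‖(ρ z, φ z)‖ ^ 2 ≤ ρ z ^ 2 + φ z ^ 2 := by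
      rw [Prod.norm_mk, Real.norm_eq_abs, Real.norm_eq_abs]
      rcases max_choice |ρ z| |φ z| with h | h <;> rw [h, sq_abs] <;> nlinarith
    rw [one_mul, norm_mul, norm_mul, norm_norm, norm_mul,
      Real.norm_of_nonneg (by positivity : 0 ≤ ρ z ^ 2 + φ z ^ 2)]
    calc _ = ‖g z‖ * ‖(ρ z, φ z)‖ ^ 2 := by ring
      _ ≤ _ := mul_le_mul_of_nonneg_left hN (norm_nonneg _)
  have hsum := ((hA.mul_isBigO he₁).sub
      ((isBigO_fst_norm.const_mul_left c).mul_isLittleO hE₁)).add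
    ((hB.mul_isBigO he₂).sub (isBigO_snd_norm.mul_isLittleO hE₂))
  refine (hsum.trans_isBigO hsq).congr_left fun z => ?_
  ring

end Asymptotics

theorem deriv_h_expansion_general (n : ℕ) (hn : 2 ≤ n) (R θ Rt θt : ℝ → ℝ)
    (hR : ∀ Z > (0 : ℝ), HasDerivAt R (-Real.tan (θ Z) + R Z / (2 * Z)) Z)
    (hθ : ∀ Z > (0 : ℝ),
      HasDerivAt θ (((n : ℝ) - 1) * (1 / Real.cos (θ Z) - 1 / R Z)) Z)
    (hRt : ∀ Z > (0 : ℝ), HasDerivAt Rt (-Real.tan (θt Z) + Rt Z / (2 * Z)) Z)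
    (hθt : ∀ Z > (0 : ℝ),
      HasDerivAt θt (((n : ℝ) - 1) * (1 / Real.cos (θt Z) - 1 / Rt Z)) Z)
    (hlimt : Tendsto (fun Z => (Rt Z, θt Z)) atTop (nhds (1, 0)))
    (hRasymp : (fun Z => R Z - 1) =o[atTop] fun Z : ℝ => 1 / Z)
    (hθasymp : (fun Z => θ Z - 1 / (2 * Z)) =o[atTop] fun Z : ℝ => 1 / Z)
    (ρ φ h : ℝ → ℝ)
    (hρ : ρ = fun Z => Rt Z - R Z) (hφ : φ = fun Z => θt Z - θ Z)
    (hh : h = fun Z => H n (1 + ρ Z) (φ Z)) :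
    (fun Z => deriv h Z + ((n : ℝ) - 1) * ((ρ Z) ^ 2 + (φ Z) ^ 2) / (2 * Z))
      =o[atTop] fun Z => ((ρ Z) ^ 2 + (φ Z) ^ 2) / (2 * Z) := by
  subst hρ hφ hh
  have hg : Tendsto (fun Z : ℝ => 1 / (2 * Z)) atTop (𝓝 0) :=
    tendsto_const_nhds.div_atTop (tendsto_id.const_mul_atTop two_pos)
  have hZg : (fun Z : ℝ => 1 / Z) =O[atTop] fun Z => 1 / (2 * Z) :=
    (isBigO_const_mul_self 2 _ _).congr_left fun Z => by ring
  have hRg := hRasymp.trans_isBigO hZg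
  have hθg : θ ~[atTop] fun Z => 1 / (2 * Z) := (hθasymp.trans_isBigO hZg).isEquivalent
  have hR1 : Tendsto R atTop (𝓝 1) := tendsto_sub_nhds_zero_iff.1 (hRg.trans_tendsto hg)
  have hθ0 : Tendsto θ atTop (𝓝 0) := hθg.symm.tendsto_nhds hg
  have hρ0 : Tendsto (fun Z => Rt Z - R Z) atTop (𝓝 0) := by
    simpa using ((continuous_fst.tendsto _).comp hlimt).sub hR1
  have hφ0 : Tendsto (fun Z => θt Z - θ Z) atTop (𝓝 0) := by
    simpa using ((continuous_snd.tendsto _).comp hlimt).sub hθ0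
  have hE₁ := (isLittleO_tan_add_tan_sub_tan_add hθg.isBigO hθ0 hφ0).trans_isBigO
    (isBigO_mul_snd_norm (ρ := fun Z => Rt Z - R Z) _)
  have hE₂ := (((isLittleO_inv_cos_add_sub hθg hθ0 hφ0).trans_isBigO
    (isBigO_mul_snd_norm (ρ := fun Z => Rt Z - R Z) _)).add
    ((isLittleO_inv_sub_inv_add_inv_sub_one hRg hR1 hρ0).trans_isBigO
      (isBigO_mul_fst_norm (φ := fun Z => θt Z - θ Z) _))).const_mul_left ((n : ℝ) - 1)
  refine (isLittleO_of_discards (isLittleO_dH_dR_add n hρ0 hφ0) (isLittleO_dH_dθ_add n hρ0 hφ0)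
    hE₁ hE₂).congr' ?_ (.of_forall fun Z => by ring)
  filter_upwards [eventually_gt_atTop 0, eventually_cos_ne_zero hφ0,
    (hρ0.const_add 1).eventually_ne (by norm_num : (1 : ℝ) + 0 ≠ 0)] with Z hZ hcos h1ρ
  have hd := hasDerivAt_H_comp_discards hn (((hRt Z hZ).sub (hR Z hZ)).const_add 1)
    ((hθt Z hZ).sub (hθ Z hZ)) h1ρ hcos
  simp only [Pi.sub_apply] at hd
  rw [hd.deriv, add_sub_cancel]
  ring

theorem deriv_h_expansion (n : ℕ) (hn : 2 ≤ n) (R θ Rt θt : ℝ → ℝ)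
    (hdom : ∀ Z > (0 : ℝ), 0 < R Z ∧ θ Z ∈ Set.Ioo (-(π / 2)) (π / 2))
    (hdomt : ∀ Z > (0 : ℝ), 0 < Rt Z ∧ θt Z ∈ Set.Ioo (-(π / 2)) (π / 2))
    (hR : ∀ Z > (0 : ℝ), HasDerivAt R (-Real.tan (θ Z) + R Z / (2 * Z)) Z)
    (hθ : ∀ Z > (0 : ℝ),
      HasDerivAt θ (((n : ℝ) - 1) * (1 / Real.cos (θ Z) - 1 / R Z)) Z)
    (hRt : ∀ Z > (0 : ℝ), HasDerivAt Rt (-Real.tan (θt Z) + Rt Z / (2 * Z)) Z)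
    (hθt : ∀ Z > (0 : ℝ),
      HasDerivAt θt (((n : ℝ) - 1) * (1 / Real.cos (θt Z) - 1 / Rt Z)) Z)
    (hlim : Tendsto (fun Z => (R Z, θ Z)) atTop (nhds (1, 0)))
    (hlimt : Tendsto (fun Z => (Rt Z, θt Z)) atTop (nhds (1, 0)))
    (hRasymp : (fun Z => R Z - 1) =o[atTop] fun Z : ℝ => 1 / Z)
    (hθasymp : (fun Z => θ Z - 1 / (2 * Z)) =o[atTop] fun Z : ℝ => 1 / Z)
    (ρ φ h : ℝ → ℝ)
    (hρ : ρ = fun Z => Rt Z - R Z) (hφ : φ = fun Z => θt Z - θ Z)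
    (hh : h = fun Z => H n (1 + ρ Z) (φ Z)) :
    (fun Z => deriv h Z + ((n : ℝ) - 1) * ((ρ Z) ^ 2 + (φ Z) ^ 2) / (2 * Z))
      =o[atTop] fun Z => ((ρ Z) ^ 2 + (φ Z) ^ 2) / (2 * Z) :=
  deriv_h_expansion_general n hn R θ Rt θt hR hθ hRt hθt hlimt hRasymp hθasymp ρ φ h hρ hφ hh
end

section
/- Let h : [Z₀,∞) → ℝ be differentiable with h(Z) → 1/n as Z → ∞, and suppose there is C > 0 and k ≥ 1 such that for all Z ≥ Z₀, h(Z) ≤ 1/n - (C/Z^k)² implies h'(Z) ≤ 0. Then for all Z ≥ Z₀, h(Z) > 1/n - (C/Z^k)², i.e., √(1/n - h(Z)) ≤ C/Z^k whenever h(Z) ≤ 1/n. -/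
open Real Filter Set Topology

theorem comparison_lemma (n : ℕ) (hn : 2 ≤ n) (Z₀ C : ℝ) (hZ₀ : 0 < Z₀) (hC : 0 < C)
    (k : ℕ) (hk : 1 ≤ k) (h : ℝ → ℝ)
    (hdiff : ∀ Z ≥ Z₀, DifferentiableAt ℝ h Z)
    (hlim : Tendsto h atTop (nhds (1 / n)))
    (himp : ∀ Z ≥ Z₀, h Z ≤ 1 / n - (C / Z ^ k) ^ 2 → deriv h Z ≤ 0) :
    ∀ Z ≥ Z₀, 1 / n - (C / Z ^ k) ^ 2 < h Z ∧
      (h Z ≤ 1 / n → Real.sqrt (1 / n - h Z) ≤ C / Z ^ k) := by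
  have hrw : ∀ z : ℝ, (C / z ^ k) ^ 2 = C ^ 2 / z ^ (2 * k) := by
    intro z; rw [div_pow, ← pow_mul, mul_comm]
  set q : ℝ → ℝ := fun z => C ^ 2 / z ^ (2 * k) with hqdef
  set g : ℝ → ℝ := fun z => h z + q z - 1 / n with hgdef
  have hqcont : ∀ z : ℝ, 0 < z → ContinuousAt q z := by
    intro z hz
    exact (continuousAt_const.div (continuousAt_pow _ _) (by positivity))
  have hqderiv : ∀ z : ℝ, 0 < z →
      HasDerivAt q ((0 * z ^ (2 * k) - C ^ 2 * ((2 * k : ℕ) * z ^ (2 * k - 1))) /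
        (z ^ (2 * k)) ^ 2) z := by
    intro z hz
    exact (hasDerivAt_const z (C ^ 2)).div (hasDerivAt_pow (2 * k) z) (by positivity)
  have hqderiv_neg : ∀ z : ℝ, 0 < z →
      (0 * z ^ (2 * k) - C ^ 2 * ((2 * k : ℕ) * z ^ (2 * k - 1))) / (z ^ (2 * k)) ^ 2 < 0 := by
    intro z hz
    apply div_neg_of_neg_of_pos
    · have hk' : (0 : ℝ) < (2 * k : ℕ) := by
        have : 1 ≤ 2 * k := le_trans hk (by omega)
        exact_mod_cast Nat.lt_of_lt_of_le Nat.zero_lt_one this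
      have : (0 : ℝ) < C ^ 2 * ((2 * k : ℕ) * z ^ (2 * k - 1)) := by positivity
      linarith
    · positivity
  have main : ∀ Z ≥ Z₀, 1 / n - (C / Z ^ k) ^ 2 < h Z := by
    by_contra hcon
    push_neg at hcon
    obtain ⟨Z₁, hZ₁, hle⟩ := hcon
    have hZ₁pos : 0 < Z₁ := lt_of_lt_of_le hZ₀ hZ₁
    have hgZ₁ : g Z₁ ≤ 0 := by
      simp only [hgdef, hqdef]
      rw [← hrw]
      linarith
    -- Step A : for all Z ≥ Z₁, g Z ≤ 0
    have stepA : ∀ Z ≥ Z₁, g Z ≤ 0 := by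
      intro Z₂ hZ₂
      by_contra hpos
      push_neg at hpos
      have hZ₁Z₂ : Z₁ < Z₂ := by
        rcases lt_or_eq_of_le hZ₂ with hlt | heq
        · exact hlt
        · exfalso; rw [← heq] at hpos; linarith
      set S : Set ℝ := {t | t ∈ Icc Z₁ Z₂ ∧ g t ≤ 0} with hSdef
      have hScont : ContinuousOn g (Icc Z₁ Z₂) := by
        intro t ht
        have htZ₀ : Z₀ ≤ t := le_trans hZ₁ ht.1
        have htpos : 0 < t := lt_of_lt_of_le hZ₀ htZ₀
        exact (((hdiff t htZ₀).continuousAt.add (hqcont t htpos)).sub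
          continuousAt_const).continuousWithinAt
      have hSclosed : IsClosed S := by
        have : S = Icc Z₁ Z₂ ∩ g ⁻¹' (Iic 0) := by
          ext t; simp [hSdef, Set.mem_inter_iff]
        rw [this]
        exact hScont.preimage_isClosed_of_isClosed isClosed_Icc isClosed_Iic
      have hSne : S.Nonempty := ⟨Z₁, ⟨le_refl _, le_of_lt hZ₁Z₂⟩, hgZ₁⟩
      have hSbdd : BddAbove S := ⟨Z₂, fun t ht => ht.1.2⟩
      set u := sSup S with hudef
      have huS : u ∈ S := hSclosed.csSup_mem hSne hSbdd
      have huZ₁ : Z₁ ≤ u := huS.1.1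
      have huZ₂ : u ≤ Z₂ := huS.1.2
      have hupos : 0 < u := lt_of_lt_of_le hZ₀ (le_trans hZ₁ huZ₁)
      have huZ₀ : Z₀ ≤ u := le_trans hZ₁ huZ₁
      have huneZ₂ : u < Z₂ := by
        rcases lt_or_eq_of_le huZ₂ with hlt | heq
        · exact hlt
        · exfalso; rw [heq] at huS; linarith [huS.2]
      -- every point of (u, Z₂] has g > 0
      have hright : ∀ t ∈ Ioc u Z₂, 0 < g t := by
        intro t ht
        by_contra hng
        push_neg at hng
        have htS : t ∈ S := ⟨⟨le_trans huZ₁ (le_of_lt ht.1), ht.2⟩, hng⟩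
        have : t ≤ u := le_csSup hSbdd htS
        exact absurd ht.1 (not_lt.mpr this)
      -- g u = 0
      have hgu0 : g u = 0 := by
        refine le_antisymm huS.2 ?_
        have hcontu : Tendsto g (𝓝[Set.Ioo u Z₂] u) (𝓝 (g u)) := by
          have hcwa := hScont u ⟨huZ₁, huZ₂⟩
          exact hcwa.mono_left (nhdsWithin_mono u (fun x hx =>
            ⟨le_trans huZ₁ (le_of_lt hx.1), le_of_lt hx.2⟩))
        have heq : 𝓝[Set.Ioo u Z₂] u = 𝓝[>] u :=
          nhdsWithin_Ioo_eq_nhdsGT huneZ₂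
        rw [heq] at hcontu
        refine ge_of_tendsto hcontu ?_
        filter_upwards [Ioo_mem_nhdsGT_of_mem ⟨le_refl u, huneZ₂⟩] with t ht
        exact le_of_lt (hright t ⟨ht.1, le_of_lt ht.2⟩)
      -- derivative of g at u is negative
      have hh' : HasDerivAt h (deriv h u) u := (hdiff u huZ₀).hasDerivAt
      have hg' : HasDerivAt g (deriv h u +
          (0 * u ^ (2 * k) - C ^ 2 * ((2 * k : ℕ) * u ^ (2 * k - 1))) / (u ^ (2 * k)) ^ 2) u :=
        (hh'.add (hqderiv u hupos)).sub_const _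
      have hhu_le : h u ≤ 1 / n - (C / u ^ k) ^ 2 := by
        have : g u ≤ 0 := le_of_eq hgu0
        simp only [hgdef, hqdef] at this
        rw [hrw]; linarith
      have hderiv_neg : deriv h u +
          (0 * u ^ (2 * k) - C ^ 2 * ((2 * k : ℕ) * u ^ (2 * k - 1))) / (u ^ (2 * k)) ^ 2 < 0 := by
        have h1 := himp u huZ₀ hhu_le
        have h2 := hqderiv_neg u hupos
        linarith
      -- from negative derivative: points just to the right have g < g u = 0
      have hslope := hasDerivAt_iff_tendsto_slope.mp hg'
      have hev : ∀ᶠ t in 𝓝[>] u, slope g u t < 0 := by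
        have h1 : ∀ᶠ t in 𝓝[≠] u, slope g u t < 0 :=
          hslope.eventually (Filter.Tendsto.eventually_lt_const hderiv_neg tendsto_id)
        exact h1.filter_mono (nhdsWithin_mono u (fun x hx =>
          Set.mem_compl_singleton_iff.mpr (ne_of_gt hx)))
      have hev2 : ∀ᶠ t in 𝓝[>] u, t ∈ Ioo u Z₂ :=
        Ioo_mem_nhdsGT_of_mem ⟨le_refl u, huneZ₂⟩
      obtain ⟨t, hts, htI⟩ := (hev.and hev2).exists
      have htu : u < t := htI.1
      have : g t < 0 := by
        by_contra hge
        push_neg at hge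
        have h0le : 0 ≤ slope g u t := by
          rw [slope_def_field]
          apply div_nonneg
          · rw [hgu0]; linarith
          · linarith
        linarith
      exact absurd (hright t ⟨htI.1, le_of_lt htI.2⟩) (not_lt.mpr (le_of_lt this))
    -- Step B : h is antitone on [Z₁, ∞)
    have hderiv_nonpos : ∀ x ∈ interior (Ici Z₁), deriv h x ≤ 0 := by
      intro x hx
      rw [interior_Ici] at hx
      have hxZ₀ : Z₀ ≤ x := le_trans hZ₁ (le_of_lt hx)
      apply himp x hxZ₀
      have := stepA x (le_of_lt hx)
      simp only [hgdef, hqdef] at this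
      rw [hrw]; linarith
    have hanti : AntitoneOn h (Ici Z₁) := by
      apply antitoneOn_of_deriv_nonpos (convex_Ici Z₁)
      · intro t ht
        exact (hdiff t (le_trans hZ₁ ht)).continuousAt.continuousWithinAt
      · intro t ht
        rw [interior_Ici] at ht
        exact (hdiff t (le_trans hZ₁ (le_of_lt ht))).differentiableWithinAt
      · exact hderiv_nonpos
    -- Step C : contradiction with the limit
    have hev : ∀ᶠ Z in atTop, h Z ≤ h Z₁ := by
      filter_upwards [eventually_ge_atTop Z₁] with Z hZ
      exact hanti (self_mem_Ici) hZ hZ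
    have hlim_le : (1 : ℝ) / n ≤ h Z₁ := le_of_tendsto hlim hev
    have hpos : 0 < (C / Z₁ ^ k) ^ 2 := by positivity
    linarith
  intro Z hZ
  refine ⟨main Z hZ, fun hle => ?_⟩
  have h1 : 1 / n - h Z < (C / Z ^ k) ^ 2 := by linarith [main Z hZ]
  have hZpos : 0 < Z := lt_of_lt_of_le hZ₀ hZ
  have h2 : Real.sqrt (1 / n - h Z) ≤ Real.sqrt ((C / Z ^ k) ^ 2) :=
    Real.sqrt_le_sqrt (le_of_lt h1)
  rwa [Real.sqrt_sq (by positivity)] at h2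
end
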